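/- arXiv:2201.12345 — 2 statements merged into one kernel-verified Lean document; each statement's English description precedes it below -/
import Mathlib

section
/- For every integer k ≥ 1 and all real x, y with x ≥ 0, |y| < 1 and |x| < y + 1 (the region Δ⁺), one has |U_k(x, y) − U_{k−1}(x, y)| ≤ √2. -/
/-- The two-variable Chebyshev polynomials `U_k(x, y)`:
`U_0 = 1`, `U_1 = x`, `U_{k+1} = x·U_k − y·U_{k−1}`. -/
noncomputable def chebU : ℕ → ℝ → ℝ → ℝ
  | 0, _, _ => 1
  | 1, x, _ => x
  | (k + 2), x, y => x * chebU (k + 1) x y - y * chebU k x y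

/-- The difference sequence `V_k = U_k - U_{k-1}` (with `U_{-1} = 0`):
`V_0 = 1`, `V_1 = x - 1`, same recurrence. -/
noncomputable def chebV (x y : ℝ) : ℕ → ℝ
  | 0 => 1
  | 1 => x - 1
  | (k + 2) => x * chebV x y (k + 1) - y * chebV x y k

lemma chebV_eq_sub (x y : ℝ) : ∀ k : ℕ, chebV x y (k + 1) = chebU (k + 1) x y - chebU k x y := by
  intro k
  induction k using Nat.twoStepInduction with
  | zero => simp [chebV, chebU]
  | one => simp [chebV, chebU]; ring
  | more k ih1 ih2 =>
      have hU : chebU (k+1+1+1) x y = x * chebU (k+1+1) x y - y * chebU (k+1) x y := rfl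
      have hU2 : chebU (k+1+1) x y = x * chebU (k+1) x y - y * chebU k x y := rfl
      have hV : chebV x y (k+1+1+1) = x * chebV x y (k+1+1) - y * chebV x y (k+1) := rfl
      rw [hV, ih2, ih1, hU, hU2]; ring

lemma chebV_invariant (x y : ℝ) : ∀ k : ℕ,
    (chebV x y (k + 1))^2 - x * chebV x y (k + 1) * chebV x y k + y * (chebV x y k)^2
      = y ^ k * (1 + y - x) := by
  intro k
  induction k with
  | zero => simp [chebV]; ring
  | succ k ih =>
      have hrec : chebV x y (k + 2) = x * chebV x y (k + 1) - y * chebV x y k := rfl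
      rw [hrec]
      calc (x * chebV x y (k + 1) - y * chebV x y k)^2
            - x * (x * chebV x y (k + 1) - y * chebV x y k) * chebV x y (k+1)
            + y * (chebV x y (k+1))^2
          = y * ((chebV x y (k + 1))^2 - x * chebV x y (k + 1) * chebV x y k
              + y * (chebV x y k)^2) := by ring
        _ = y ^ (k + 1) * (1 + y - x) := by rw [ih]; ring

lemma key_step (x y a b t : ℝ) (hx : 0 ≤ x) (hx2 : x < 1 + y) (hy2 : y < 1)
    (ht1 : t ≤ 1)
    (hq : a^2 - x*a*b + y*b^2 = t*(1+y-x))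
    (hb : b^2 ≤ 2) : a^2 ≤ 2 := by
  have hc : (0:ℝ) ≤ 1+y-x := by linarith
  have h1 : 0 ≤ x*(a-b)^2 := mul_nonneg hx (sq_nonneg _)
  have h2 : t*(1+y-x) ≤ 1+y-x := by nlinarith
  rcases le_or_gt (2*y) x with hxy | hxy
  · have h3 : 0 ≤ (x-2*y)*(2-b^2) := mul_nonneg (by linarith) (by linarith)
    nlinarith [h1, h2, h3]
  · nlinarith [h1, h2, mul_nonneg (by linarith : (0:ℝ) ≤ 2*y - x) (sq_nonneg b)]

lemma chebV_sq_le_two (x y : ℝ) (h2 : 0 ≤ x) (h3 : |y| < 1) (h4 : |x| < y + 1) :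
    ∀ k : ℕ, (chebV x y k)^2 ≤ 2 := by
  obtain ⟨hy1, hy2⟩ := abs_lt.mp h3
  have hx2 : x < 1 + y := by
    have := (abs_lt.mp h4).2
    linarith
  intro k
  induction k with
  | zero => norm_num [chebV]
  | succ k ih =>
      have hq := chebV_invariant x y k
      have ht1 : y ^ k ≤ 1 := by
        calc y ^ k ≤ |y ^ k| := le_abs_self _
          _ = |y| ^ k := abs_pow y k
          _ ≤ 1 := pow_le_one₀ (abs_nonneg y) (le_of_lt h3)
      exact key_step x y (chebV x y (k+1)) (chebV x y k) (y ^ k) h2 hx2 hy2 ht1 hq ih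

theorem abs_chebU_sub_prev_le_sqrt_two (k : ℕ) (hk : 1 ≤ k) (x y : ℝ)
    (h2 : 0 ≤ x) (h3 : |y| < 1) (h4 : |x| < y + 1) :
    |chebU k x y - chebU (k - 1) x y| ≤ Real.sqrt 2 := by
  obtain ⟨j, rfl⟩ : ∃ j, k = j + 1 := ⟨k - 1, (Nat.succ_pred_eq_of_pos hk).symm⟩
  have hsub : j + 1 - 1 = j := rfl
  rw [hsub, ← chebV_eq_sub x y j]
  have h := chebV_sq_le_two x y h2 h3 h4 (j + 1)
  calc |chebV x y (j + 1)| = Real.sqrt ((chebV x y (j + 1))^2) := (Real.sqrt_sq_eq_abs _).symm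
    _ ≤ Real.sqrt 2 := Real.sqrt_le_sqrt h
end

section
/- For every integer k ≥ 1 and every fixed real y with 0 < y ≤ 1, the function x ↦ U_k(x, y) − y·U_{k−1}(x, y) is monotonically increasing on the interval [2√y, ∞); that is, for all x₁, x₂ with 2√y ≤ x₁ ≤ x₂, one has U_k(x₁, y) − y·U_{k−1}(x₁, y) ≤ U_k(x₂, y) − y·U_{k−1}(x₂, y). -/
lemma chebU_aux1 (y : ℝ) (hy0 : 0 ≤ y) (x : ℝ) (hx : 2 * Real.sqrt y ≤ x) :
    ∀ k, 0 ≤ chebU k x y ∧ Real.sqrt y * chebU k x y ≤ chebU (k + 1) x y := by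
  have hs : 0 ≤ Real.sqrt y := Real.sqrt_nonneg y
  have hsq : Real.sqrt y * Real.sqrt y = y := Real.mul_self_sqrt hy0
  intro k
  induction k with
  | zero => simp [chebU]; nlinarith
  | succ n ih =>
    obtain ⟨h0, h1⟩ := ih
    have h0' : 0 ≤ chebU (n + 1) x y := le_trans (by positivity) h1
    refine ⟨h0', ?_⟩
    show Real.sqrt y * chebU (n + 1) x y ≤ x * chebU (n + 1) x y - y * chebU n x y
    nlinarith [mul_le_mul_of_nonneg_right hx h0']

lemma chebU_aux2 (y : ℝ) (hy0 : 0 ≤ y) (x₁ x₂ : ℝ) (hx : 2 * Real.sqrt y ≤ x₁)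
    (h12 : x₁ ≤ x₂) :
    ∀ k, 0 ≤ chebU k x₂ y - chebU k x₁ y ∧
      Real.sqrt y * (chebU k x₂ y - chebU k x₁ y) ≤
        chebU (k + 1) x₂ y - chebU (k + 1) x₁ y := by
  have hs : 0 ≤ Real.sqrt y := Real.sqrt_nonneg y
  have hsq : Real.sqrt y * Real.sqrt y = y := Real.mul_self_sqrt hy0
  have hx2 : 2 * Real.sqrt y ≤ x₂ := le_trans hx h12
  intro k
  induction k with
  | zero => exact ⟨by simp [chebU], by simpa [chebU] using h12⟩
  | succ n ih =>
    obtain ⟨h0, h1⟩ := ih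
    have h0' : 0 ≤ chebU (n + 1) x₂ y - chebU (n + 1) x₁ y := le_trans (by positivity) h1
    refine ⟨h0', ?_⟩
    have hU1 := (chebU_aux1 y hy0 x₁ hx (n + 1)).1
    show Real.sqrt y * (chebU (n + 1) x₂ y - chebU (n + 1) x₁ y) ≤
      (x₂ * chebU (n + 1) x₂ y - y * chebU n x₂ y) -
      (x₁ * chebU (n + 1) x₁ y - y * chebU n x₁ y)
    nlinarith [mul_le_mul_of_nonneg_right hx2 h0', mul_le_mul_of_nonneg_right h12 hU1]

theorem chebU_sub_y_mul_monotone (k : ℕ) (hk : 1 ≤ k) (y : ℝ) (hy0 : 0 < y) (hy1 : y ≤ 1) :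
    ∀ x₁ x₂ : ℝ, 2 * Real.sqrt y ≤ x₁ → x₁ ≤ x₂ →
      chebU k x₁ y - y * chebU (k - 1) x₁ y ≤ chebU k x₂ y - y * chebU (k - 1) x₂ y := by
  intro x₁ x₂ hx h12
  obtain ⟨m, rfl⟩ := Nat.exists_eq_add_of_le hk
  have hkm : 1 + m - 1 = m := by omega
  rw [hkm, add_comm 1 m]
  have hs : 0 ≤ Real.sqrt y := Real.sqrt_nonneg y
  have hsq : Real.sqrt y * Real.sqrt y = y := Real.mul_self_sqrt hy0.le
  have hs1 : Real.sqrt y ≤ 1 := by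
    nlinarith [Real.sqrt_nonneg y]
  obtain ⟨h0, h1⟩ := chebU_aux2 y hy0.le x₁ x₂ hx h12 m
  nlinarith [mul_le_mul_of_nonneg_right hs1 (mul_nonneg hs h0)]
end
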